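/- arXiv:math/0403150 — 5 statements merged into one kernel-verified Lean document; each statement's English description precedes it below -/
import Mathlib

section
/- For every integer M ≥ 2 there exists a function f : (0,1) × ℕ → (0,1), (ε, d) ↦ ε', with the following two properties. (i) For every fixed ε ∈ (0,1), f(ε, d) converges to ε^{(M−1)/M} as d → ∞. (ii) For every ε ∈ (0,1), every positive integer d and every nonnegative integer c with c ≤ (1 − ε)·d^M / M!, one has c_{<d>} ≤ (1 − f(ε, d))·d^{M−1} / (M−1)!. -/
open Filter Finset
open scoped Classical

/-- `IsDDecomp d c r f` says that `f r < f (r+1) < ⋯ < f d` (with `f r ≥ r`, `1 ≤ r ≤ d`)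
is a `d`-decomposition of `c`, i.e. `c = ∑_{i=r}^{d} C(f i, i)`. -/
def IsDDecomp (d c r : ℕ) (f : ℕ → ℕ) : Prop :=
  1 ≤ r ∧ r ≤ d ∧ r ≤ f r ∧ (∀ i, r ≤ i → i < d → f i < f (i + 1)) ∧
    c = ∑ i ∈ Finset.Icc r d, Nat.choose (f i) i

/-- The lowering operation `c ↦ c_{<d>}`: given the `d`-decomposition
`c = ∑_{i=r}^{d} C(c_i, i)`, set `c_{<d>} = ∑_{i=r}^{d} C(c_i - 1, i)`;
by convention it is `0` when no `d`-decomposition exists (e.g. for `c = 0`). -/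
noncomputable def lowerD (d c : ℕ) : ℕ :=
  if h : ∃ p : ℕ × (ℕ → ℕ), IsDDecomp d c p.1 p.2 then
    ∑ i ∈ Finset.Icc h.choose.1 d, Nat.choose (h.choose.2 i - 1) i
  else 0


open scoped Nat

/-
Write `M = m + 2` and `c = ∑_{i=r}^{d} C(c_i, i)`. Since `c_i - i` is nondecreasing and the bound
on `c` forces `c_d ≤ d + m + 1`, every `c_i ≤ i + m + 1`.

The lowered terms obey the hockey-stick bound `∑_{r ≤ i < j} C(c_i - 1, i) ≤ C(c_j - 1, j - 1)`;
together with `j C(c_j - 1, j) = (c_j - j) C(c_j - 1, j - 1)` an induction gives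
`d c_{<d>} ≤ M c`, hence `c_{<d>} ≤ (1 - ε) d^{M-1} / (M-1)!`.

For the sharp saving let `[t, d]` be the final block of indices with `c_i = i + m + 1`. On it `c`
and `c_{<d>}` are hockey-stick sums, so `c ≥ C(d+M, M) - C(t+M-1, M)`, which with the bound on
`c` forces `t ≥ ε^{1/M} d - M`; the indices below `t` contribute only `O(d^{M-2})` to `c_{<d>}`.
Hence `c_{<d>} ≤ (1 - ε^{(M-1)/M} + O(1/d)) d^{M-1} / (M-1)!`, and `f(ε, d)` is the larger of
`ε` and this explicit saving, which is a continuous function of `1/d`.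
-/

namespace Nat

theorem sum_Ico_choose_add_choose (k : ℕ) {t j : ℕ} (h : t ≤ j) :
    ∑ i ∈ Ico t j, (i + k).choose k + (t + k).choose (k + 1) = (j + k).choose (k + 1) := by
  induction j, h using Nat.le_induction with
  | base => simp
  | succ j _ ih =>
    rw [sum_Ico_succ_top (by omega), add_right_comm, ih, add_right_comm, choose_succ_succ',
      add_comm]

theorem pow_le_factorial_mul_choose_add (n k : ℕ) : (n + 1) ^ k ≤ k ! * (n + k).choose k := by
  rw [← descFactorial_eq_factorial_mul_choose]
  simpa [Nat.add_right_comm n k 1] using pow_sub_le_descFactorial (n + k) k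

theorem factorial_mul_choose_le_pow (n k : ℕ) : k ! * n.choose k ≤ n ^ k := by
  rw [← descFactorial_eq_factorial_mul_choose]
  exact descFactorial_le_pow n k

end Nat

section Increasing

variable {f : ℕ → ℕ} {r d : ℕ}

theorem apply_add_le_apply_add_of_lt_succ (hinc : ∀ i, r ≤ i → i < d → f i < f (i + 1)) {i j : ℕ}
    (hri : r ≤ i) (hij : i ≤ j) (hjd : j ≤ d) : f i + j ≤ f j + i := by
  induction j, hij using Nat.le_induction with
  | base => rfl
  | succ j hij ih =>
    have := hinc j (hri.trans hij) hjd
    have := ih (by omega)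
    omega

theorem apply_lt_apply_of_lt_succ (hinc : ∀ i, r ≤ i → i < d → f i < f (i + 1)) {i j : ℕ}
    (hri : r ≤ i) (hij : i < j) (hjd : j ≤ d) : f i < f j := by
  have := apply_add_le_apply_add_of_lt_succ hinc hri hij.le hjd
  omega

theorem sum_Ico_choose_pred_le (hr : 1 ≤ r) (hfr : 0 < f r)
    (hinc : ∀ i, r ≤ i → i < d → f i < f (i + 1)) {j : ℕ} (hrj : r ≤ j) (hjd : j ≤ d + 1) :
    ∀ n, (∀ i ∈ Ico r j, f i < n) → ∑ i ∈ Ico r j, (f i - 1).choose i ≤ (n - 1).choose (j - 1) := by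
  induction j, hrj using Nat.le_induction with
  | base => simp
  | succ j hrj ih =>
    intro n hn
    have hprev : ∀ i ∈ Ico r j, f i < f j := fun i hi ↦
      apply_lt_apply_of_lt_succ hinc (mem_Ico.1 hi).1 (mem_Ico.1 hi).2 (by omega)
    have hfj : f r + j ≤ f j + r := apply_add_le_apply_add_of_lt_succ hinc le_rfl hrj (by omega)
    obtain ⟨p, hp⟩ : ∃ p, f j = p + 1 := ⟨f j - 1, by omega⟩
    obtain ⟨q, rfl⟩ : ∃ q, j = q + 1 := ⟨j - 1, by omega⟩
    have hlast : f (q + 1) < n := hn _ (mem_Ico.2 ⟨hrj, by omega⟩)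
    calc ∑ i ∈ Ico r (q + 1 + 1), (f i - 1).choose i
        = ∑ i ∈ Ico r (q + 1), (f i - 1).choose i + p.choose (q + 1) := by
          rw [sum_Ico_succ_top (by omega), hp, Nat.add_sub_cancel]
      _ ≤ p.choose q + p.choose (q + 1) := by
          gcongr
          simpa [hp] using ih (by omega) _ hprev
      _ = (p + 1).choose (q + 1) := (Nat.choose_succ_succ' p q).symm
      _ ≤ (n - 1).choose (q + 1 + 1 - 1) := Nat.choose_le_choose _ (by omega)

theorem mul_sum_Ico_choose_pred_le (hr : 1 ≤ r) (hfr : 0 < f r)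
    (hinc : ∀ i, r ≤ i → i < d → f i < f (i + 1)) {k j : ℕ} (hrj : r ≤ j) (hjd : j ≤ d + 1)
    (hk : ∀ i ∈ Ico r j, f i ≤ i + k) :
    j * ∑ i ∈ Ico r j, (f i - 1).choose i ≤ (k + 1) * ∑ i ∈ Ico r j, (f i).choose i := by
  induction j, hrj using Nat.le_induction with
  | base => simp
  | succ j hrj ih =>
    have hS := sum_Ico_choose_pred_le hr hfr hinc hrj (by omega) (f j) fun i hi ↦
      apply_lt_apply_of_lt_succ hinc (mem_Ico.1 hi).1 (mem_Ico.1 hi).2 (by omega)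
    have ih := ih (by omega) fun i hi ↦ hk i (mem_Ico.2 ⟨(mem_Ico.1 hi).1, by grind⟩)
    have hfj : f r + j ≤ f j + r := apply_add_le_apply_add_of_lt_succ hinc le_rfl hrj (by omega)
    have hjk := hk j (mem_Ico.2 ⟨hrj, by omega⟩)
    rw [sum_Ico_succ_top (by omega), sum_Ico_succ_top (by omega)]
    obtain ⟨p, hp⟩ : ∃ p, f j = p + 1 := ⟨f j - 1, by omega⟩
    obtain ⟨q, rfl⟩ : ∃ q, j = q + 1 := ⟨j - 1, by omega⟩
    simp only [hp, Nat.add_sub_cancel] at hS hjk ⊢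
    have hlast : p.choose (q + 1) * (q + 1) ≤ p.choose q * k :=
      (Nat.choose_succ_right_eq p q).trans_le (Nat.mul_le_mul_left _ (by omega))
    have hpascal := Nat.choose_succ_succ' p q
    nlinarith

end Increasing

namespace IsDDecomp

variable {d c r : ℕ} {f : ℕ → ℕ}

theorem choose_le (h : IsDDecomp d c r f) : (f d).choose d ≤ c := by
  obtain ⟨-, hrd, -, -, rfl⟩ := h
  exact single_le_sum (f := fun i ↦ (f i).choose i) (fun i _ ↦ Nat.zero_le _)
    (mem_Icc.2 ⟨hrd, le_rfl⟩)

theorem le_add_of_lt_choose (h : IsDDecomp d c r f) {k : ℕ}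
    (hc : c < (d + k + 1).choose (k + 1)) : f d ≤ d + k := by
  by_contra! hk
  have := (Nat.choose_le_choose d (show d + (k + 1) ≤ f d by omega)).trans h.choose_le
  rw [Nat.choose_symm_add, ← add_assoc] at this
  omega

theorem mul_sum_choose_pred_le (h : IsDDecomp d c r f) {k : ℕ} (hk : f d ≤ d + k) :
    d * ∑ i ∈ Icc r d, (f i - 1).choose i ≤ (k + 1) * c := by
  obtain ⟨hr, hrd, hfr, hinc, rfl⟩ := h
  rw [← Ico_add_one_right_eq_Icc]
  calc d * ∑ i ∈ Ico r (d + 1), (f i - 1).choose i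
      ≤ (d + 1) * ∑ i ∈ Ico r (d + 1), (f i - 1).choose i := by gcongr; omega
    _ ≤ (k + 1) * ∑ i ∈ Ico r (d + 1), (f i).choose i :=
        mul_sum_Ico_choose_pred_le hr (by omega) hinc (by omega) le_rfl fun i hi ↦ by
          have := apply_add_le_apply_add_of_lt_succ hinc (mem_Ico.1 hi).1 (by grind) le_rfl
          omega

theorem exists_top_block (h : IsDDecomp d c r f) {m : ℕ} (hd : f d ≤ d + (m + 1)) :
    ∃ t, 1 ≤ t ∧ t ≤ d + 1 ∧
      (d + 1 + (m + 1)).choose (m + 2) ≤ c + (t + (m + 1)).choose (m + 2) ∧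
      ∑ i ∈ Icc r d, (f i - 1).choose i + (t + m).choose (m + 1)
        ≤ (t - 1 + m).choose m + (d + 1 + m).choose (m + 1) := by
  obtain ⟨hr, hrd, hfr, hinc, rfl⟩ := h
  have hmono {i j : ℕ} (hri : r ≤ i) (hij : i ≤ j) (hjd : j ≤ d) : f i + j ≤ f j + i :=
    apply_add_le_apply_add_of_lt_succ hinc hri hij hjd
  have hP : ∃ t, r ≤ t ∧ ∀ i, t ≤ i → i ≤ d → f i = i + (m + 1) :=
    ⟨d + 1, by omega, fun i _ _ ↦ by omega⟩
  obtain ⟨hrt, htop⟩ := Nat.find_spec hP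
  set t := Nat.find hP
  have htd : t ≤ d + 1 := Nat.find_min' hP ⟨by omega, fun i _ _ ↦ by omega⟩
  have hlow : ∀ i ∈ Ico r t, f i < t + m := fun i hi ↦ by
    obtain ⟨hri, hit⟩ := mem_Ico.1 hi
    by_contra! hge
    refine Nat.find_min hP hit ⟨hri, fun j hij hjd ↦ ?_⟩
    have := hmono hri hij hjd
    have := hmono (hri.trans hij) hjd le_rfl
    omega
  have hsplit (g : ℕ → ℕ) :
      ∑ i ∈ Icc r d, g i = ∑ i ∈ Ico r t, g i + ∑ i ∈ Ico t (d + 1), g i := by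
    rw [← Ico_add_one_right_eq_Icc, sum_Ico_consecutive _ hrt htd]
  have htopc : ∑ i ∈ Ico t (d + 1), (f i).choose i
      = ∑ i ∈ Ico t (d + 1), (i + (m + 1)).choose (m + 1) :=
    sum_congr rfl fun i hi ↦ by
      rw [htop i (mem_Ico.1 hi).1 (by grind), Nat.choose_symm_add]
  have htopl : ∑ i ∈ Ico t (d + 1), (f i - 1).choose i = ∑ i ∈ Ico t (d + 1), (i + m).choose m :=
    sum_congr rfl fun i hi ↦ by
      rw [htop i (mem_Ico.1 hi).1 (by grind), ← add_assoc, Nat.add_sub_cancel,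
        Nat.choose_symm_add]
  have hlowl := sum_Ico_choose_pred_le hr (by omega) hinc hrt htd _ hlow
  rw [show t + m - 1 = t - 1 + m by omega, Nat.choose_symm_add] at hlowl
  refine ⟨t, by omega, htd, ?_, ?_⟩
  · have := Nat.sum_Ico_choose_add_choose (m + 1) htd
    rw [show m + 1 + 1 = m + 2 from rfl] at this
    rw [hsplit, htopc]
    omega
  · have := Nat.sum_Ico_choose_add_choose m htd
    rw [hsplit, htopl]
    omega

end IsDDecomp

theorem lowerD_eq_zero_or_exists (d c : ℕ) :
    lowerD d c = 0 ∨
      ∃ r f, IsDDecomp d c r f ∧ lowerD d c = ∑ i ∈ Icc r d, (f i - 1).choose i := by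
  unfold lowerD
  split_ifs with h
  · exact Or.inr ⟨_, _, h.choose_spec, rfl⟩
  · exact Or.inl rfl

section Estimates

variable {d c : ℕ} {ε : ℝ}

theorem lt_choose_of_factorial_mul_le {k : ℕ} (hε : 0 ≤ ε)
    (hc : ((k + 1)! : ℝ) * c ≤ (1 - ε) * d ^ (k + 1)) : c < (d + k + 1).choose (k + 1) := by
  have hpow : (((d + 1) ^ (k + 1) : ℕ) : ℝ) ≤ (((k + 1)! * (d + (k + 1)).choose (k + 1) : ℕ) : ℝ) :=
    by exact_mod_cast Nat.pow_le_factorial_mul_choose_add d (k + 1)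
  push_cast at hpow
  have hlt : (d : ℝ) ^ (k + 1) < ((d : ℝ) + 1) ^ (k + 1) := by gcongr; linarith
  have hd : (0 : ℝ) ≤ (d : ℝ) ^ (k + 1) := by positivity
  have : ((k + 1)! : ℝ) * c < ((k + 1)! : ℝ) * ((d + (k + 1)).choose (k + 1) : ℕ) := by
    nlinarith
  exact_mod_cast lt_of_mul_lt_mul_left this (by positivity)

theorem rpow_inv_mul_le_of_choose_le {k t : ℕ} (hε : 0 ≤ ε)
    (hc : ((k + 1)! : ℝ) * c ≤ (1 - ε) * d ^ (k + 1))
    (h : (d + 1 + k).choose (k + 1) ≤ c + (t + k).choose (k + 1)) :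
    ε ^ (((k + 1 : ℕ) : ℝ)⁻¹) * d ≤ t + (k + 1) := by
  have hd : (d : ℝ) ^ (k + 1) ≤ ((d + 1 + k).choose (k + 1) : ℝ) * (k + 1)! := by
    have := Nat.pow_le_factorial_mul_choose_add d (k + 1)
    rw [show d + (k + 1) = d + 1 + k by ring, mul_comm] at this
    calc (d : ℝ) ^ (k + 1) ≤ ((d + 1) ^ (k + 1) : ℕ) := by push_cast; gcongr; linarith
      _ ≤ _ := by exact_mod_cast this
  have ht : ((t + k).choose (k + 1) : ℝ) * (k + 1)! ≤ ((t : ℝ) + (k + 1)) ^ (k + 1) := by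
    have := Nat.factorial_mul_choose_le_pow (t + k) (k + 1)
    rw [mul_comm] at this
    calc ((t + k).choose (k + 1) : ℝ) * (k + 1)! ≤ ((t + k) ^ (k + 1) : ℕ) := by exact_mod_cast this
      _ ≤ _ := by push_cast; gcongr; linarith
  have hcast : ((d + 1 + k).choose (k + 1) : ℝ) ≤ c + (t + k).choose (k + 1) := by exact_mod_cast h
  have hfac : (0 : ℝ) ≤ (k + 1)! := by positivity
  have key : ε * (d : ℝ) ^ (k + 1) ≤ ((t : ℝ) + (k + 1)) ^ (k + 1) := by nlinarith
  rw [← pow_le_pow_iff_left₀ (by positivity) (by positivity) (Nat.succ_ne_zero k), mul_pow,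
    Real.rpow_inv_natCast_pow hε (Nat.succ_ne_zero k)]
  exact key

theorem factorial_mul_lowerD_le (hε0 : 0 ≤ ε) (hε1 : ε ≤ 1) {k : ℕ} (hd : 0 < d)
    (hc : ((k + 1)! : ℝ) * c ≤ (1 - ε) * d ^ (k + 1)) :
    (k ! : ℝ) * lowerD d c ≤ (1 - ε) * d ^ k := by
  rcases lowerD_eq_zero_or_exists d c with h0 | ⟨r, f, hdec, hL⟩
  · rw [h0, Nat.cast_zero, mul_zero]
    exact mul_nonneg (by linarith) (by positivity)
  · have hN := hdec.mul_sum_choose_pred_le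
      (hdec.le_add_of_lt_choose (lt_choose_of_factorial_mul_le hε0 hc))
    rw [← hL] at hN
    have hN' : (d : ℝ) * lowerD d c ≤ (k + 1) * c := by exact_mod_cast hN
    have hd' : (0 : ℝ) < d := by exact_mod_cast hd
    refine le_of_mul_le_mul_left ?_ hd'
    calc (d : ℝ) * ((k ! : ℝ) * lowerD d c) = k ! * ((d : ℝ) * lowerD d c) := by ring
      _ ≤ k ! * ((k + 1) * c) := by gcongr
      _ = (k + 1)! * c := by push_cast [Nat.factorial_succ]; ring
      _ ≤ (1 - ε) * d ^ (k + 1) := hc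
      _ = d * ((1 - ε) * d ^ k) := by ring

theorem factorial_mul_lowerD_le_sub (hε0 : 0 ≤ ε) (hε1 : ε ≤ 1) {m : ℕ}
    (hc : ((m + 2)! : ℝ) * c ≤ (1 - ε) * d ^ (m + 2)) :
    ((m + 1)! : ℝ) * lowerD d c ≤ ((d : ℝ) + (m + 2)) ^ (m + 1)
      - max (ε ^ (((m + 2 : ℕ) : ℝ)⁻¹) * d - (m + 2)) 0 ^ (m + 1)
      + (m + 1) * ((d : ℝ) + (m + 2)) ^ m := by
  rcases lowerD_eq_zero_or_exists d c with h0 | ⟨r, f, hdec, hL⟩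
  · have hroot : ε ^ (((m + 2 : ℕ) : ℝ)⁻¹) ≤ 1 := Real.rpow_le_one hε0 hε1 (by positivity)
    have hmax : max (ε ^ (((m + 2 : ℕ) : ℝ)⁻¹) * d - (m + 2)) 0 ≤ (d : ℝ) + (m + 2) :=
      max_le (by nlinarith [(Nat.cast_nonneg d : (0 : ℝ) ≤ d)]) (by positivity)
    have := pow_le_pow_left₀ (le_max_right _ _) hmax (m + 1)
    rw [h0, Nat.cast_zero, mul_zero]
    have : (0 : ℝ) ≤ (m + 1) * ((d : ℝ) + (m + 2)) ^ m := by positivity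
    linarith
  · obtain ⟨t, ht1, htd, htop, hlow⟩ :=
      hdec.exists_top_block (hdec.le_add_of_lt_choose (lt_choose_of_factorial_mul_le hε0 hc))
    have ht : ε ^ (((m + 2 : ℕ) : ℝ)⁻¹) * d ≤ t + ((m + 1 : ℕ) + 1) :=
      rpow_inv_mul_le_of_choose_le hε0 hc htop
    rw [← hL] at hlow
    have hpow : t ^ (m + 1) ≤ (m + 1)! * (t + m).choose (m + 1) := by
      simpa [show t - 1 + 1 = t by omega, show t - 1 + (m + 1) = t + m by omega] using
        Nat.pow_le_factorial_mul_choose_add (t - 1) (m + 1)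
    have htopC : (m + 1)! * (d + 1 + m).choose (m + 1) ≤ (d + (m + 2)) ^ (m + 1) :=
      (Nat.factorial_mul_choose_le_pow _ _).trans (Nat.pow_le_pow_left (by omega) _)
    have hlowC : (m + 1)! * (t - 1 + m).choose m ≤ (m + 1) * (d + (m + 2)) ^ m := by
      rw [Nat.factorial_succ, mul_assoc]
      exact Nat.mul_le_mul_left _
        ((Nat.factorial_mul_choose_le_pow _ _).trans (Nat.pow_le_pow_left (by omega) _))
    have hN : (m + 1)! * lowerD d c + t ^ (m + 1)
        ≤ (m + 1) * (d + (m + 2)) ^ m + (d + (m + 2)) ^ (m + 1) := by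
      have := Nat.mul_le_mul_left (m + 1)! hlow
      rw [mul_add, mul_add] at this
      omega
    have hN' : ((m + 1)! : ℝ) * lowerD d c + (t : ℝ) ^ (m + 1)
        ≤ (m + 1) * ((d : ℝ) + (m + 2)) ^ m + ((d : ℝ) + (m + 2)) ^ (m + 1) := by
      exact_mod_cast hN
    have : max (ε ^ (((m + 2 : ℕ) : ℝ)⁻¹) * d - (m + 2)) 0 ^ (m + 1) ≤ (t : ℝ) ^ (m + 1) :=
      pow_le_pow_left₀ (le_max_right _ _) (max_le (by push_cast at ht ⊢; linarith) t.cast_nonneg) _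
    linarith

end Estimates

-- The saving guaranteed by `factorial_mul_lowerD_le_sub`, written in terms of `u = 1 / d`.
noncomputable def savingRatio (m : ℕ) (ε u : ℝ) : ℝ :=
  1 - ((1 + (m + 2) * u) ^ (m + 1) - max (ε ^ (((m + 2 : ℕ) : ℝ)⁻¹) - (m + 2) * u) 0 ^ (m + 1)
    + (m + 1) * u * (1 + (m + 2) * u) ^ m)

section SavingRatio

variable {m : ℕ} {ε : ℝ}

theorem continuous_savingRatio (m : ℕ) (ε : ℝ) : Continuous (savingRatio m ε) := by
  unfold savingRatio
  fun_prop

theorem savingRatio_zero (hε : 0 ≤ ε) : savingRatio m ε 0 = ε ^ (((m : ℝ) + 1) / (m + 2)) := by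
  have hroot : 0 ≤ ε ^ (((m + 2 : ℕ) : ℝ)⁻¹) := Real.rpow_nonneg hε _
  simp only [savingRatio, mul_zero, zero_mul, sub_zero, add_zero, one_pow, max_eq_left hroot]
  rw [sub_sub_cancel, ← Real.rpow_natCast, ← Real.rpow_mul hε]
  push_cast
  ring_nf

theorem savingRatio_lt_one (hε0 : 0 ≤ ε) (hε1 : ε < 1) {u : ℝ} (hu : 0 ≤ u) :
    savingRatio m ε u < 1 := by
  have hroot : ε ^ (((m + 2 : ℕ) : ℝ)⁻¹) < 1 := Real.rpow_lt_one hε0 hε1 (by positivity)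
  have hmax : max (ε ^ (((m + 2 : ℕ) : ℝ)⁻¹) - (m + 2) * u) 0 < 1 + (m + 2) * u :=
    max_lt (by nlinarith) (by positivity)
  have := pow_lt_pow_left₀ hmax (le_max_right _ _) (by omega : m + 1 ≠ 0)
  have : 0 ≤ (m + 1) * u * (1 + (m + 2) * u) ^ m := by positivity
  rw [savingRatio]
  linarith

theorem one_sub_savingRatio_inv_mul {x : ℝ} (hx : 0 < x) :
    (1 - savingRatio m ε x⁻¹) * x ^ (m + 1)
      = (x + (m + 2)) ^ (m + 1) - max (ε ^ (((m + 2 : ℕ) : ℝ)⁻¹) * x - (m + 2)) 0 ^ (m + 1)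
        + (m + 1) * (x + (m + 2)) ^ m := by
  have e1 : 1 + (m + 2) * x⁻¹ = (x + (m + 2)) / x := by field_simp
  have e2 : max (ε ^ (((m + 2 : ℕ) : ℝ)⁻¹) - (m + 2) * x⁻¹) 0
      = max (ε ^ (((m + 2 : ℕ) : ℝ)⁻¹) * x - (m + 2)) 0 / x := by
    rw [eq_div_iff hx.ne', max_mul_of_nonneg _ _ hx.le, zero_mul, sub_mul, mul_assoc,
      inv_mul_cancel₀ hx.ne', mul_one]
  simp only [savingRatio, e1, e2, div_pow]
  field_simp
  ring

end SavingRatio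

theorem stmt0 (M : ℕ) (hM : 2 ≤ M) :
    ∃ f : ℝ → ℕ → ℝ,
      (∀ ε ∈ Set.Ioo (0:ℝ) 1, ∀ d : ℕ, f ε d ∈ Set.Ioo (0:ℝ) 1) ∧
      (∀ ε ∈ Set.Ioo (0:ℝ) 1,
        Tendsto (fun d : ℕ => f ε d) atTop (nhds (ε ^ (((M : ℝ) - 1) / (M : ℝ))))) ∧
      (∀ ε ∈ Set.Ioo (0:ℝ) 1, ∀ d : ℕ, 0 < d → ∀ c : ℕ,
        (c : ℝ) ≤ (1 - ε) * (d : ℝ) ^ M / (Nat.factorial M : ℝ) →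
        (lowerD d c : ℝ) ≤ (1 - f ε d) * (d : ℝ) ^ (M - 1) / (Nat.factorial (M - 1) : ℝ)) := by
  obtain ⟨m, rfl⟩ : ∃ m, M = m + 2 := ⟨M - 2, by omega⟩
  refine ⟨fun ε d ↦ max ε (savingRatio m ε (d : ℝ)⁻¹), ?_, ?_, ?_⟩
  · rintro ε ⟨hε0, hε1⟩ d
    exact ⟨lt_max_of_lt_left hε0, max_lt hε1 (savingRatio_lt_one hε0.le hε1 (by positivity))⟩
  · rintro ε ⟨hε0, hε1⟩
    have hexp : (((m + 2 : ℕ) : ℝ) - 1) / ((m + 2 : ℕ) : ℝ) = ((m : ℝ) + 1) / (m + 2) := by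
      push_cast; ring
    have hlt : ε < ε ^ (((m : ℝ) + 1) / (m + 2)) := by
      simpa using Real.rpow_lt_rpow_of_exponent_gt hε0 hε1
        (show ((m : ℝ) + 1) / (m + 2) < 1 by rw [div_lt_one (by positivity)]; linarith)
    rw [hexp, ← max_eq_right hlt.le, ← savingRatio_zero hε0.le]
    exact tendsto_const_nhds.max
      (((continuous_savingRatio m ε).tendsto 0).comp tendsto_inv_atTop_nhds_zero_nat)
  · rintro ε ⟨hε0, hε1⟩ d hd c hc
    rw [le_div_iff₀ (by positivity), mul_comm] at hc
    rw [show m + 2 - 1 = m + 1 from rfl, le_div_iff₀ (by positivity), mul_comm,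
      ← min_sub_sub_left, min_mul_of_nonneg _ _ (by positivity)]
    refine le_min (factorial_mul_lowerD_le hε0.le hε1.le hd hc) ?_
    rw [one_sub_savingRatio_inv_mul (by positivity)]
    exact factorial_mul_lowerD_le_sub hε0.le hε1.le hc
end

section
/- Let M ≥ 1 and 0 ≤ e < d be integers, and let c be a nonnegative integer with c ≤ C(M+d, d) − C(M+e, e). Then c_{<d>} ≤ C(M−1+d, d) − C(M−1+e, e). -/
open Filter Finset
open scoped Classical

/-! The lowering is monotone: comparing top terms, a decomposition with the smaller top term
lies entirely below the next binomial coefficient (a diagonal hockey-stick bound), and equal top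
terms reduce to the tails. The theorem then applies monotonicity to the decomposition
`∑_{i=e+1}^{d} C(M-1+i, i) = C(M+d, d) - C(M+e, e)`, whose lowering is the right-hand side. -/

/-- Truncated subtraction makes the case `N = 0` hold too: every term is then `C(i-1, i) = 0`. -/
lemma sum_Icc_choose_add_sub_one_add_choose (N : ℕ) {e d : ℕ} (hed : e ≤ d) :
    ∑ i ∈ Icc (e + 1) d, (N + i - 1).choose i + (N + e).choose e = (N + d).choose d := by
  induction d, hed using Nat.le_induction with
  | base => simp
  | succ d hed ih =>
    rw [sum_Icc_succ_top (by omega), add_right_comm, ih, ← add_assoc, Nat.choose_succ_succ,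
      Nat.add_sub_cancel]

lemma sum_choose_lt_choose_add {N r d : ℕ} {h : ℕ → ℕ} (hr : 1 ≤ r)
    (hh : ∀ i ∈ Icc r d, h i ≤ N + i - 1) :
    ∑ i ∈ Icc r d, (h i).choose i < (N + d).choose d := by
  have hstick := sum_Icc_choose_add_sub_one_add_choose N (Nat.zero_le d)
  simp only [zero_add, Nat.choose_zero_right] at hstick
  calc ∑ i ∈ Icc r d, (h i).choose i ≤ ∑ i ∈ Icc r d, (N + i - 1).choose i :=
        sum_le_sum fun i hi => Nat.choose_le_choose i (hh i hi)
    _ ≤ ∑ i ∈ Icc 1 d, (N + i - 1).choose i := sum_le_sum_of_subset (Icc_subset_Icc_left hr)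
    _ < (N + d).choose d := by omega

namespace IsDDecomp

variable {d c r : ℕ} {f : ℕ → ℕ}

lemma add_sub_le (hf : IsDDecomp d c r f) {i j : ℕ} (hri : r ≤ i) (hij : i ≤ j) (hjd : j ≤ d) :
    f i + (j - i) ≤ f j := by
  induction j, hij using Nat.le_induction with
  | base => simp
  | succ j hij ih =>
    have := hf.2.2.2.1 j (hri.trans hij) (by omega)
    have := ih (by omega)
    omega

lemma le_apply (hf : IsDDecomp d c r f) {i : ℕ} (hri : r ≤ i) (hid : i ≤ d) : i ≤ f i := by
  have := hf.add_sub_le le_rfl hri hid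
  have := hf.2.2.1
  omega

lemma lt_choose_succ_top (hf : IsDDecomp d c r f) : c < (f d + 1).choose d := by
  have htop := hf.le_apply hf.2.1 le_rfl
  rw [hf.2.2.2.2, show f d + 1 = (f d + 1 - d) + d by omega]
  refine sum_choose_lt_choose_add hf.1 fun i hi => ?_
  have := hf.add_sub_le (mem_Icc.1 hi).1 (mem_Icc.1 hi).2 le_rfl
  omega

lemma sum_choose_pred_lt (hf : IsDDecomp d c r f) :
    ∑ i ∈ Icc r d, (f i - 1).choose i < (f d).choose d := by
  have htop := hf.le_apply hf.2.1 le_rfl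
  rw [show f d = (f d - d) + d by omega]
  refine sum_choose_lt_choose_add hf.1 fun i hi => ?_
  have := hf.add_sub_le (mem_Icc.1 hi).1 (mem_Icc.1 hi).2 le_rfl
  omega

lemma pos (hf : IsDDecomp d c r f) : 0 < c := by
  rw [hf.2.2.2.2]
  exact lt_of_lt_of_le (Nat.choose_pos (hf.le_apply hf.2.1 le_rfl))
    (single_le_sum (f := fun i => (f i).choose i) (fun _ _ => Nat.zero_le _)
      (mem_Icc.2 ⟨hf.2.1, le_rfl⟩))

lemma eq_sum_add_top (hf : IsDDecomp (d + 1) c r f) :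
    c = ∑ i ∈ Icc r d, (f i).choose i + (f (d + 1)).choose (d + 1) :=
  hf.2.2.2.2.trans (sum_Icc_succ_top (by have := hf.2.1; omega) _)

lemma restrict (hf : IsDDecomp (d + 1) c r f) (hrd : r ≤ d) :
    IsDDecomp d (∑ i ∈ Icc r d, (f i).choose i) r f :=
  ⟨hf.1, hrd, hf.2.2.1, fun i hri hid => hf.2.2.2.1 i hri (by omega), rfl⟩

end IsDDecomp

theorem sum_choose_pred_le_of_le {d a b r s : ℕ} {f g : ℕ → ℕ} (hf : IsDDecomp d a r f)
    (hg : IsDDecomp d b s g) (hab : a ≤ b) :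
    ∑ i ∈ Icc r d, (f i - 1).choose i ≤ ∑ i ∈ Icc s d, (g i - 1).choose i := by
  induction d generalizing a b r s with
  | zero => exact absurd (hf.1.trans hf.2.1) (by omega)
  | succ d ih =>
    have hgtop : (g (d + 1) - 1).choose (d + 1) ≤ ∑ i ∈ Icc s (d + 1), (g i - 1).choose i :=
      single_le_sum (f := fun i => (g i - 1).choose i) (fun _ _ => Nat.zero_le _)
        (mem_Icc.2 ⟨hg.2.1, le_rfl⟩)
    rcases lt_trichotomy (f (d + 1)) (g (d + 1)) with hlt | heq | hgt
    · calc ∑ i ∈ Icc r (d + 1), (f i - 1).choose i ≤ (f (d + 1)).choose (d + 1) :=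
            hf.sum_choose_pred_lt.le
        _ ≤ (g (d + 1) - 1).choose (d + 1) := Nat.choose_le_choose _ (by omega)
        _ ≤ _ := hgtop
    · have hab' := hab
      rw [hf.eq_sum_add_top, hg.eq_sum_add_top, heq, Nat.add_le_add_iff_right] at hab'
      rw [sum_Icc_succ_top hf.2.1, sum_Icc_succ_top hg.2.1, heq, Nat.add_le_add_iff_right]
      rcases Nat.lt_or_ge d r with hdr | hrd
      · simp [Icc_eq_empty_of_lt hdr]
      have hsd : s ≤ d := by
        by_contra! hds
        have := (hf.restrict hrd).pos
        rw [Icc_eq_empty_of_lt hds, sum_empty] at hab'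
        omega
      exact ih (hf.restrict hrd) (hg.restrict hsd) hab'
    · have := calc b < (g (d + 1) + 1).choose (d + 1) := hg.lt_choose_succ_top
        _ ≤ (f (d + 1)).choose (d + 1) := Nat.choose_le_choose _ hgt
        _ ≤ a := hf.eq_sum_add_top ▸ Nat.le_add_left _ _
      omega

lemma lowerD_le_of_isDDecomp {d b s c : ℕ} {g : ℕ → ℕ} (hg : IsDDecomp d b s g) (hcb : c ≤ b) :
    lowerD d c ≤ ∑ i ∈ Icc s d, (g i - 1).choose i := by
  unfold lowerD
  split_ifs with h
  · exact sum_choose_pred_le_of_le h.choose_spec hg hcb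
  · exact Nat.zero_le _

theorem stmt7 (M e d c : ℕ) (hM : 1 ≤ M) (hed : e < d)
    (hc : (c : ℤ) ≤ (Nat.choose (M + d) d : ℤ) - (Nat.choose (M + e) e : ℤ)) :
    (lowerD d c : ℤ) ≤ (Nat.choose (M - 1 + d) d : ℤ) - (Nat.choose (M - 1 + e) e : ℤ) := by
  have hg : IsDDecomp d (∑ i ∈ Icc (e + 1) d, (M + i - 1).choose i) (e + 1) (fun i => M + i - 1) :=
    ⟨by omega, hed, show e + 1 ≤ M + (e + 1) - 1 by omega,
      fun i _ _ => show M + i - 1 < M + (i + 1) - 1 by omega, rfl⟩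
  have hcb : c ≤ ∑ i ∈ Icc (e + 1) d, (M + i - 1).choose i := by
    have := sum_Icc_choose_add_sub_one_add_choose M hed.le
    omega
  have hlower : ∑ i ∈ Icc (e + 1) d, (M + i - 1 - 1).choose i + (M - 1 + e).choose e =
      (M - 1 + d).choose d := by
    rw [← sum_Icc_choose_add_sub_one_add_choose (M - 1) hed.le]
    congr 1
    exact sum_congr rfl fun i _ => by congr 1; omega
  have := lowerD_le_of_isDDecomp hg hcb
  omega
end

section
/- Let M ≥ 1 be an integer, let α ∈ [0,1] be a real number, and let e : ℕ → ℕ be a function with e(d) ≤ d for all d and such that e(d)/d → α as d → ∞. Then the real sequence d ↦ (C(M+d, d) − C(M+e(d), e(d))) · M! / d^M converges to 1 − α^M as d → ∞. -/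
open Filter Finset

/-!
After multiplying by `M!`, the binomial coefficient `C(M + n, n)` is the product
`(n + 1) ⋯ (n + M)`, so `C(M + n(d), n(d)) · M! / d ^ M` is a product of `M` factors
`(n(d) + i + 1) / d`, each tending to the limit of `n(d) / d`. Applying this to `n(d) = d` and
`n(d) = e(d)` and subtracting gives the limit `1 - α ^ M`.
-/

theorem Nat.cast_choose_add_mul_factorial {R : Type*} [CommSemiring R] (k n : ℕ) :
    ((k + n).choose n : R) * k.factorial = ∏ i ∈ range k, ((n : R) + i + 1) := by
  have h : ∏ i ∈ range k, (n + i + 1) = k.factorial * (k + n).choose n := by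
    rw [add_comm k n, Nat.choose_symm_add, ← Nat.ascFactorial_eq_factorial_mul_choose,
      Nat.ascFactorial_eq_prod_range]
    exact prod_congr rfl fun i _ => by ring
  rw [mul_comm]
  exact_mod_cast (congrArg (Nat.cast (R := R)) h).symm

theorem tendsto_cast_choose_add_mul_factorial_div_pow (M : ℕ) {n : ℕ → ℕ} {a : ℝ}
    (hn : Tendsto (fun d : ℕ => (n d : ℝ) / d) atTop (nhds a)) :
    Tendsto (fun d : ℕ => ((M + n d).choose (n d) : ℝ) * M.factorial / (d : ℝ) ^ M)
      atTop (nhds (a ^ M)) := by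
  have hprod : ∀ d : ℕ, ((M + n d).choose (n d) : ℝ) * M.factorial / (d : ℝ) ^ M
      = ∏ i ∈ range M, (((n d : ℝ) + i + 1) / d) := fun d => by
    rw [Nat.cast_choose_add_mul_factorial, prod_div_distrib, prod_const, card_range]
  simp only [hprod]
  rw [show a ^ M = ∏ _i ∈ range M, a by rw [prod_const, card_range]]
  refine tendsto_finsetProd (range M) fun i _ => ?_
  have hi : Tendsto (fun d : ℕ => ((i : ℝ) + 1) / d) atTop (nhds 0) :=
    tendsto_const_nhds.div_atTop tendsto_natCast_atTop_atTop
  simpa only [add_assoc, add_div, add_zero] using hn.add hi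

theorem stmt9_general (M : ℕ) (α : ℝ)
    (e : ℕ → ℕ)
    (hlim : Tendsto (fun d : ℕ => (e d : ℝ) / (d : ℝ)) atTop (nhds α)) :
    Tendsto (fun d : ℕ =>
        ((Nat.choose (M + d) d : ℝ) - (Nat.choose (M + e d) (e d) : ℝ)) *
          (Nat.factorial M : ℝ) / (d : ℝ) ^ M)
      atTop (nhds (1 - α ^ M)) := by
  have hid : Tendsto (fun d : ℕ => (d : ℝ) / d) atTop (nhds 1) :=
    tendsto_const_nhds.congr' <| (eventually_ne_atTop 0).mono fun d hd =>
      (div_self (Nat.cast_ne_zero.mpr hd)).symm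
  have h := (tendsto_cast_choose_add_mul_factorial_div_pow M hid).sub
    (tendsto_cast_choose_add_mul_factorial_div_pow M hlim)
  simpa only [one_pow, sub_mul, sub_div] using h

theorem stmt9 (M : ℕ) (hM : 1 ≤ M) (α : ℝ) (hα : α ∈ Set.Icc (0:ℝ) 1)
    (e : ℕ → ℕ) (he : ∀ d : ℕ, e d ≤ d)
    (hlim : Tendsto (fun d : ℕ => (e d : ℝ) / (d : ℝ)) atTop (nhds α)) :
    Tendsto (fun d : ℕ =>
        ((Nat.choose (M + d) d : ℝ) - (Nat.choose (M + e d) (e d) : ℝ)) *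
          (Nat.factorial M : ℝ) / (d : ℝ) ^ M)
      atTop (nhds (1 - α ^ M)) :=
  stmt9_general M α e hlim
end

section
/- Fix an integer M ≥ 1 and a real number ε ∈ (0,1). For each positive integer d, the set S(d) = { e ∈ ℕ : 1 ≤ e ≤ d and (1 − ε)·d^M / M! ≤ C(M+d, d) − C(M+e, e) } is nonempty for all sufficiently large d; letting e(d) denote the largest element of S(d) (and e(d) = 0 when S(d) is empty), one has e(d)/d → ε^{1/M} as d → ∞. -/
/-!
Since `M! · C(M+x, x) = (x+1)(x+2)⋯(x+M)` lies between `x^M` and `(x+M)^M`, membership of `x`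
in `S(d)` is squeezed between `(x+M)^M ≤ ε d^M` (sufficient) and
`x^M ≤ (d+M)^M - (1-ε) d^M` (necessary). With `α = ε^{1/M}`, the first shows that
`⌊α d - M⌋` lies in `S(d)` once `d` is large, and the second bounds `e(d)/d` above by
`((1 + M/d)^M - (1-ε))^{1/M}`; both bounds tend to `α`.
-/

open Filter Finset

/-- `Sset M ε d` is the set of natural numbers `e` with `1 ≤ e ≤ d` and
`(1 - ε)·d^M / M! ≤ C(M+d, d) - C(M+e, e)`. -/
def Sset (M : ℕ) (ε : ℝ) (d : ℕ) : Set ℕ :=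
  {x : ℕ | 1 ≤ x ∧ x ≤ d ∧
    (1 - ε) * (d : ℝ) ^ M / (Nat.factorial M : ℝ) ≤
      (Nat.choose (M + d) d : ℝ) - (Nat.choose (M + x) x : ℝ)}

open scoped Nat

theorem factorial_mul_add_choose (M x : ℕ) : M ! * (M + x).choose x = (M + x).descFactorial M := by
  rw [Nat.descFactorial_eq_factorial_mul_choose, Nat.choose_symm_add]

theorem pow_le_factorial_mul_add_choose (M x : ℕ) : x ^ M ≤ M ! * (M + x).choose x := by
  rw [factorial_mul_add_choose]
  calc x ^ M ≤ (M + x + 1 - M) ^ M := Nat.pow_le_pow_left (by omega) M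
    _ ≤ _ := Nat.pow_sub_le_descFactorial _ _

theorem factorial_mul_add_choose_le_pow (M x : ℕ) : M ! * (M + x).choose x ≤ (x + M) ^ M := by
  rw [factorial_mul_add_choose, add_comm x]
  exact Nat.descFactorial_le_pow _ _

section Sset

variable {M d x : ℕ} {ε : ℝ}

theorem mem_Sset_of_add_pow_le (hx : 1 ≤ x) (hxd : x ≤ d)
    (h : ((x : ℝ) + M) ^ M ≤ ε * (d : ℝ) ^ M) : x ∈ Sset M ε d := by
  refine ⟨hx, hxd, ?_⟩
  have hdM : (d : ℝ) ^ M ≤ M ! * (M + d).choose d := by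
    exact_mod_cast pow_le_factorial_mul_add_choose M d
  have hxM : (M ! * (M + x).choose x : ℝ) ≤ (x + M) ^ M := by
    exact_mod_cast factorial_mul_add_choose_le_pow M x
  rw [div_le_iff₀ (by positivity)]
  linarith

theorem div_pow_le_of_mem_Sset (hd : 0 < d) (hx : x ∈ Sset M ε d) :
    ((x : ℝ) / d) ^ M ≤ (1 + M / d) ^ M - (1 - ε) := by
  obtain ⟨-, -, h⟩ := hx
  have hdM : (M ! * (M + d).choose d : ℝ) ≤ (d + M) ^ M := by
    exact_mod_cast factorial_mul_add_choose_le_pow M d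
  have hxM : (x : ℝ) ^ M ≤ M ! * (M + x).choose x := by
    exact_mod_cast pow_le_factorial_mul_add_choose M x
  have hd0 : (0 : ℝ) < d := by exact_mod_cast hd
  have hscale : (1 + M / d : ℝ) ^ M * d ^ M = (d + M) ^ M := by
    rw [← mul_pow]; congr 1; field_simp
  rw [div_le_iff₀ (by positivity)] at h
  rw [div_pow, div_le_iff₀ (by positivity)]
  linarith

theorem one_mem_Sset (hM : 1 ≤ M) (hε : 0 < ε) (hd : ((1 : ℝ) + M) ^ M / ε ≤ d) :
    1 ∈ Sset M ε d := by
  have hd0 : (0 : ℝ) < d := lt_of_lt_of_le (by positivity) hd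
  have hd1 : 1 ≤ d := Nat.cast_pos.1 hd0
  refine mem_Sset_of_add_pow_le le_rfl hd1 ?_
  rw [div_le_iff₀ hε] at hd
  have hdM : (d : ℝ) ≤ d ^ M := le_self_pow₀ (by exact_mod_cast hd1) (by omega)
  calc ((1 : ℕ) + M : ℝ) ^ M = (1 + M) ^ M := by push_cast; rfl
    _ ≤ ε * d := by linarith
    _ ≤ ε * d ^ M := by gcongr

theorem exists_mem_Sset_gt {α : ℝ} (hα1 : α ≤ 1) (hd : M + 1 ≤ α * d) :
    ∃ x ∈ Sset M (α ^ M) d, α * d - M - 1 < x := by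
  set x := ⌊α * d - M⌋₊
  have hx : (x : ℝ) ≤ α * d - M := Nat.floor_le (by linarith)
  refine ⟨x, mem_Sset_of_add_pow_le ?_ ?_ ?_, by linarith [Nat.lt_floor_add_one (α * d - M)]⟩
  · exact Nat.le_floor (by push_cast; linarith)
  · have : α * d ≤ d := mul_le_of_le_one_left (by positivity) hα1
    exact_mod_cast (show (x : ℝ) ≤ d by linarith [(M.cast_nonneg : (0 : ℝ) ≤ M)])
  · rw [← mul_pow]
    exact pow_le_pow_left₀ (by positivity) (by linarith) M

theorem div_le_rpow_of_mem_Sset (hM : M ≠ 0) (hd : 0 < d) (hx : x ∈ Sset M ε d) :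
    (x : ℝ) / d ≤ ((1 + M / d) ^ M - (1 - ε)) ^ ((1 : ℝ) / M) := by
  have hpow := div_pow_le_of_mem_Sset hd hx
  rw [one_div, Real.le_rpow_inv_iff_of_pos (by positivity) (le_trans (by positivity) hpow)
    (by positivity), Real.rpow_natCast]
  exact hpow

theorem sub_div_le_div_of_mem_upperBounds {α : ℝ} (hα0 : 0 < α) (hα1 : α ≤ 1)
    (hd : (M + 1) / α ≤ d) {y : ℕ} (hy : y ∈ upperBounds (Sset M (α ^ M) d)) :
    α - (M + 1) / d ≤ (y : ℝ) / d := by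
  have hd0 : (0 : ℝ) < d := lt_of_lt_of_le (by positivity) hd
  rw [div_le_iff₀ hα0, mul_comm] at hd
  obtain ⟨x, hx, hgt⟩ := exists_mem_Sset_gt hα1 hd
  have hxy : (x : ℝ) ≤ y := by exact_mod_cast hy hx
  rw [sub_div' hd0.ne', div_le_div_iff_of_pos_right hd0]
  linarith

end Sset

theorem tendsto_one_add_div_pow_sub_rpow (M : ℕ) (ε : ℝ) :
    Tendsto (fun d : ℕ => ((1 + M / d) ^ M - (1 - ε)) ^ ((1 : ℝ) / M)) atTop
      (nhds (ε ^ ((1 : ℝ) / M))) := by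
  have hbase : Tendsto (fun d : ℕ => (1 + (M : ℝ) / d) ^ M - (1 - ε)) atTop (nhds ε) := by
    simpa using (((tendsto_const_nhds (x := (1 : ℝ))).add
      (tendsto_const_div_atTop_nhds_zero_nat (M : ℝ))).pow M).sub_const (1 - ε)
  exact hbase.rpow_const (Or.inr (by positivity))

theorem stmt10_general (M : ℕ) (hM : 1 ≤ M) (ε : ℝ) (hε : ε ∈ Set.Ioo (0:ℝ) 1)
    (e : ℕ → ℕ)
    (he : ∀ d : ℕ, (Sset M ε d).Nonempty → IsGreatest (Sset M ε d) (e d)) :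
    (∃ D : ℕ, ∀ d : ℕ, D ≤ d → 0 < d → (Sset M ε d).Nonempty) ∧
    Tendsto (fun d : ℕ => (e d : ℝ) / (d : ℝ)) atTop (nhds (ε ^ ((1 : ℝ) / (M : ℝ)))) := by
  obtain ⟨hε0, hε1⟩ := hε
  have hne : ∀ d, ⌈((1 : ℝ) + M) ^ M / ε⌉₊ ≤ d → (Sset M ε d).Nonempty :=
    fun d hd => ⟨1, one_mem_Sset hM hε0 (Nat.ceil_le.1 hd)⟩
  refine ⟨⟨_, fun d hd _ => hne d hd⟩, ?_⟩
  set α := ε ^ ((1 : ℝ) / M)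
  have hαM : α ^ M = ε := by
    simp only [α, one_div]; exact Real.rpow_inv_natCast_pow hε0.le (by omega)
  have hα0 : 0 < α := Real.rpow_pos_of_pos hε0 _
  have hα1 : α ≤ 1 := Real.rpow_le_one hε0.le hε1.le (by positivity)
  have hlow : ∀ᶠ d : ℕ in atTop, α - (M + 1) / d ≤ (e d : ℝ) / d := by
    filter_upwards [eventually_ge_atTop ⌈((M : ℝ) + 1) / α⌉₊,
      eventually_ge_atTop ⌈((1 : ℝ) + M) ^ M / ε⌉₊] with d hdα hdε
    refine sub_div_le_div_of_mem_upperBounds hα0 hα1 (Nat.ceil_le.1 hdα) ?_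
    rw [hαM]
    exact (he d (hne d hdε)).2
  have hup : ∀ᶠ d : ℕ in atTop, (e d : ℝ) / d ≤ ((1 + M / d) ^ M - (1 - ε)) ^ ((1 : ℝ) / M) := by
    filter_upwards [eventually_ge_atTop ⌈((1 : ℝ) + M) ^ M / ε⌉₊, eventually_gt_atTop 0]
      with d hdε hd0
    exact div_le_rpow_of_mem_Sset (by omega) hd0 (he d (hne d hdε)).1
  have hlim_low : Tendsto (fun d : ℕ => α - (M + 1) / d) atTop (nhds α) := by
    simpa using tendsto_const_nhds.sub (tendsto_const_div_atTop_nhds_zero_nat ((M : ℝ) + 1))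
  exact tendsto_of_tendsto_of_tendsto_of_le_of_le' hlim_low
    (tendsto_one_add_div_pow_sub_rpow M ε) hlow hup

theorem stmt10 (M : ℕ) (hM : 1 ≤ M) (ε : ℝ) (hε : ε ∈ Set.Ioo (0:ℝ) 1)
    (e : ℕ → ℕ)
    (he : ∀ d : ℕ, (Sset M ε d).Nonempty → IsGreatest (Sset M ε d) (e d))
    (he0 : ∀ d : ℕ, ¬ (Sset M ε d).Nonempty → e d = 0) :
    (∃ D : ℕ, ∀ d : ℕ, D ≤ d → 0 < d → (Sset M ε d).Nonempty) ∧
    Tendsto (fun d : ℕ => (e d : ℝ) / (d : ℝ)) atTop (nhds (ε ^ ((1 : ℝ) / (M : ℝ)))) :=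
  stmt10_general M hM ε hε e he
end

section
/- Fix an integer M ≥ 2 and a real number ε ∈ (0,1). For each positive integer d, let e(d) be the largest integer e with 1 ≤ e ≤ d and (1 − ε)·d^M / M! ≤ C(M+d, d) − C(M+e, e) (and e(d) = 0 if no such integer exists). Then the real sequence d ↦ (C(M−1+d, d) − C(M−1+e(d), e(d))) · (M−1)! / d^{M−1} converges to 1 − ε^{(M−1)/M} as d → ∞. -/
open Filter Finset

/-!
`C(k + x, x) * k!` lies between `x ^ k` and `(x + k) ^ k`, so it is `x ^ k + O(x ^ (k - 1))`.
The condition defining `e(d)` therefore says `e(d) ^ M ≤ ε d ^ M + O(d ^ (M - 1))`, and maximality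
of `e(d)` gives the reverse inequality, so `e(d) / d → ε ^ (1 / M)`. The same estimates with
`k = M - 1` turn the difference of binomials into
`(1 - (e(d) / d) ^ (M - 1)) d ^ (M - 1) / (M - 1)! + o(d ^ (M - 1))`.
-/

open Topology Nat

lemma pow_div_factorial_le_choose (k n : ℕ) : (n : ℝ) ^ k / k ! ≤ (k + n).choose n := by
  rw [← Nat.choose_symm_add]
  calc (n : ℝ) ^ k / k ! ≤ ((k + n + 1 - k : ℕ) : ℝ) ^ k / k ! := by gcongr; omega
    _ ≤ _ := Nat.pow_le_choose k (k + n)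

lemma choose_le_add_pow_div_factorial (k n : ℕ) :
    ((k + n).choose n : ℝ) ≤ ((n : ℝ) + k) ^ k / k ! := by
  rw [← Nat.choose_symm_add, add_comm (n : ℝ)]
  exact_mod_cast Nat.choose_le_pow_div k (k + n)

lemma tendsto_choose_mul_factorial_div_pow (k : ℕ) {a : ℕ → ℕ} {c : ℝ}
    (ha : Tendsto (fun d ↦ (a d : ℝ) / d) atTop (𝓝 c)) :
    Tendsto (fun d ↦ ((k + a d).choose (a d) : ℝ) * k ! / (d : ℝ) ^ k) atTop (𝓝 (c ^ k)) := by
  have hupper : Tendsto (fun d ↦ ((a d : ℝ) / d + k / d) ^ k) atTop (𝓝 (c ^ k)) := by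
    simpa using (ha.add (tendsto_const_div_atTop_nhds_zero_nat (k : ℝ))).pow k
  refine tendsto_of_tendsto_of_tendsto_of_le_of_le (ha.pow k) hupper (fun d ↦ ?_) (fun d ↦ ?_)
  · rw [div_pow]
    gcongr
    exact (div_le_iff₀ (by positivity)).1 (pow_div_factorial_le_choose k (a d))
  · rw [← add_div, div_pow]
    gcongr
    exact (le_div_iff₀ (by positivity)).1 (choose_le_add_pow_div_factorial k (a d))

lemma tendsto_choose_mul_factorial_div_pow_self (k : ℕ) :
    Tendsto (fun d ↦ ((k + d).choose d : ℝ) * k ! / (d : ℝ) ^ k) atTop (𝓝 1) := by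
  have hid : Tendsto (fun d : ℕ ↦ (d : ℝ) / d) atTop (𝓝 1) :=
    tendsto_const_nhds.congr' <| (eventually_ne_atTop 0).mono fun d hd ↦
      (div_self (Nat.cast_ne_zero.2 hd)).symm
  simpa using tendsto_choose_mul_factorial_div_pow k hid

section Sset

variable {M : ℕ} {ε : ℝ} {d x : ℕ}

lemma pow_le_of_mem_Sset (hx : x ∈ Sset M ε d) :
    (x : ℝ) ^ M ≤ ((d : ℝ) + M) ^ M - (1 - ε) * (d : ℝ) ^ M := by
  have hx' := hx.2.2
  have hlow := pow_div_factorial_le_choose M x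
  have hup := choose_le_add_pow_div_factorial M d
  have hfac : (0 : ℝ) < M ! := by positivity
  rw [← div_le_div_iff_of_pos_right hfac, sub_div]
  linarith

lemma lt_pow_of_succ_notMem_Sset (hxd : x + 1 ≤ d) (hx : x + 1 ∉ Sset M ε d) :
    ε * (d : ℝ) ^ M < ((x : ℝ) + 1 + M) ^ M := by
  have hx' : ((M + d).choose d : ℝ) - (M + (x + 1)).choose (x + 1) < (1 - ε) * d ^ M / M ! :=
    lt_of_not_ge fun h ↦ hx ⟨by omega, hxd, h⟩
  have hlow := pow_div_factorial_le_choose M d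
  have hup := choose_le_add_pow_div_factorial M (x + 1)
  have hfac : (0 : ℝ) < M ! := by positivity
  rw [← div_lt_div_iff_of_pos_right hfac]
  push_cast at hup
  have hsplit : (1 - ε) * (d : ℝ) ^ M / M ! = d ^ M / (M ! : ℝ) - ε * d ^ M / M ! := by ring
  linarith

lemma eventually_one_mem_Sset (hM : M ≠ 0) (hε : 0 < ε) : ∀ᶠ d in atTop, 1 ∈ Sset M ε d := by
  have hgrow : Tendsto (fun d : ℕ ↦ ε * (d : ℝ) ^ M / M !) atTop atTop :=
    (((tendsto_pow_atTop hM).comp tendsto_natCast_atTop_atTop).const_mul_atTop hε).atTop_div_const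
      (by positivity)
  filter_upwards [hgrow.eventually_ge_atTop ((M : ℝ) + 1), eventually_ge_atTop 1] with d hd hd1
  refine ⟨le_rfl, hd1, ?_⟩
  have hlow := pow_div_factorial_le_choose M d
  have hsplit : (1 - ε) * (d : ℝ) ^ M / M ! = d ^ M / (M ! : ℝ) - ε * d ^ M / M ! := by ring
  rw [Nat.choose_one_right]
  push_cast
  linarith

lemma div_le_of_mem_Sset (hM : M ≠ 0) (hx : x ∈ Sset M ε d) (hd : 0 < d) :
    (x : ℝ) / d ≤ ((1 + (M : ℝ) / d) ^ M - 1 + ε) ^ (M⁻¹ : ℝ) := by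
  have hd' : (0 : ℝ) < d := by exact_mod_cast hd
  have hpow : ((x : ℝ) / d) ^ M ≤ (1 + (M : ℝ) / d) ^ M - 1 + ε := by
    have hscale : ((1 + (M : ℝ) / d) ^ M - 1 + ε) * d ^ M
        = ((d : ℝ) + M) ^ M - (1 - ε) * d ^ M := by
      rw [add_mul, sub_mul, ← mul_pow, add_mul, div_mul_cancel₀ _ hd'.ne']
      ring
    rw [div_pow, div_le_iff₀ (by positivity), hscale]
    exact pow_le_of_mem_Sset hx
  calc (x : ℝ) / d = (((x : ℝ) / d) ^ M) ^ (M⁻¹ : ℝ) :=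
        (Real.pow_rpow_inv_natCast (by positivity) hM).symm
    _ ≤ _ := Real.rpow_le_rpow (by positivity) hpow (by positivity)

lemma sub_le_div_of_isGreatest_Sset (hM : M ≠ 0) (hε₀ : 0 ≤ ε) (hε₁ : ε ≤ 1)
    (hx : IsGreatest (Sset M ε d) x) (hd : 0 < d) :
    ε ^ (M⁻¹ : ℝ) - ((M : ℝ) + 1) / d ≤ x / d := by
  have hd' : (0 : ℝ) < d := by exact_mod_cast hd
  rw [sub_le_iff_le_add, ← add_div, le_div_iff₀ hd']
  rcases hx.1.2.1.lt_or_eq with hlt | rfl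
  · have hsucc : x + 1 ∉ Sset M ε d := fun h ↦ by linarith [hx.2 h]
    have hroot : (ε ^ (M⁻¹ : ℝ) * d) ^ M < ((x : ℝ) + 1 + M) ^ M := by
      rw [mul_pow, Real.rpow_inv_natCast_pow hε₀ hM]
      exact lt_pow_of_succ_notMem_Sset hlt hsucc
    linarith [lt_of_pow_lt_pow_left₀ M (by positivity) hroot]
  · have hc : ε ^ (M⁻¹ : ℝ) ≤ 1 := Real.rpow_le_one hε₀ hε₁ (by positivity)
    nlinarith

lemma tendsto_div_of_isGreatest_Sset (hM : M ≠ 0) (hε₀ : 0 < ε) (hε₁ : ε ≤ 1) {e : ℕ → ℕ}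
    (he : ∀ᶠ d in atTop, IsGreatest (Sset M ε d) (e d)) :
    Tendsto (fun d ↦ (e d : ℝ) / d) atTop (𝓝 (ε ^ (M⁻¹ : ℝ))) := by
  have hlower : Tendsto (fun d : ℕ ↦ ε ^ (M⁻¹ : ℝ) - ((M : ℝ) + 1) / d) atTop
      (𝓝 (ε ^ (M⁻¹ : ℝ))) := by
    simpa using tendsto_const_nhds.sub (tendsto_const_div_atTop_nhds_zero_nat ((M : ℝ) + 1))
  have hupper : Tendsto (fun d : ℕ ↦ ((1 + (M : ℝ) / d) ^ M - 1 + ε) ^ (M⁻¹ : ℝ)) atTop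
      (𝓝 (ε ^ (M⁻¹ : ℝ))) := by
    have h : Tendsto (fun d : ℕ ↦ (1 + (M : ℝ) / d) ^ M - 1 + ε) atTop (𝓝 ε) := by
      simpa using ((((tendsto_const_div_atTop_nhds_zero_nat (M : ℝ)).const_add 1).pow M).sub_const
        1).add_const ε
    exact h.rpow_const (Or.inl hε₀.ne')
  refine tendsto_of_tendsto_of_tendsto_of_le_of_le' hlower hupper ?_ ?_
  · filter_upwards [he, eventually_gt_atTop 0] with d hd hd0
    exact sub_le_div_of_isGreatest_Sset hM hε₀.le hε₁ hd hd0
  · filter_upwards [he, eventually_gt_atTop 0] with d hd hd0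
    exact div_le_of_mem_Sset hM hd.1 hd0

end Sset

theorem stmt11_general (M : ℕ) (hM : 2 ≤ M) (ε : ℝ) (hε : ε ∈ Set.Ioo (0:ℝ) 1)
    (e : ℕ → ℕ)
    (he : ∀ d : ℕ, (Sset M ε d).Nonempty → IsGreatest (Sset M ε d) (e d)) :
    Tendsto (fun d : ℕ =>
        ((Nat.choose (M - 1 + d) d : ℝ) - (Nat.choose (M - 1 + e d) (e d) : ℝ)) *
          (Nat.factorial (M - 1) : ℝ) / (d : ℝ) ^ (M - 1))
      atTop (nhds (1 - ε ^ (((M : ℝ) - 1) / (M : ℝ)))) := by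
  have hM0 : M ≠ 0 := by omega
  have he' : ∀ᶠ d in atTop, IsGreatest (Sset M ε d) (e d) :=
    (eventually_one_mem_Sset hM0 hε.1).mono fun d h ↦ he d ⟨1, h⟩
  have hlim := (tendsto_choose_mul_factorial_div_pow_self (M - 1)).sub
    (tendsto_choose_mul_factorial_div_pow (M - 1)
      (tendsto_div_of_isGreatest_Sset hM0 hε.1 hε.2.le he'))
  have hexp : (ε ^ (M⁻¹ : ℝ)) ^ (M - 1) = ε ^ (((M : ℝ) - 1) / M) := by
    rw [← Real.rpow_natCast, ← Real.rpow_mul hε.1.le, Nat.cast_sub (by omega : 1 ≤ M)]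
    ring_nf
  rw [hexp] at hlim
  refine hlim.congr fun d ↦ ?_
  rw [sub_mul, sub_div]

theorem stmt11 (M : ℕ) (hM : 2 ≤ M) (ε : ℝ) (hε : ε ∈ Set.Ioo (0:ℝ) 1)
    (e : ℕ → ℕ)
    (he : ∀ d : ℕ, (Sset M ε d).Nonempty → IsGreatest (Sset M ε d) (e d))
    (he0 : ∀ d : ℕ, ¬ (Sset M ε d).Nonempty → e d = 0) :
    Tendsto (fun d : ℕ =>
        ((Nat.choose (M - 1 + d) d : ℝ) - (Nat.choose (M - 1 + e d) (e d) : ℝ)) *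
          (Nat.factorial (M - 1) : ℝ) / (d : ℝ) ^ (M - 1))
      atTop (nhds (1 - ε ^ (((M : ℝ) - 1) / (M : ℝ)))) :=
  stmt11_general M hM ε hε e he
end
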